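/- arXiv:1201.3377 — 2 statements merged into one kernel-verified Lean document; each statement's English description precedes it below -/
import Mathlib

section
/- For a quasi-graded poset (P,ρ,ζ̄) of rank n+1 with 0̂ and 1̂, the value of the inverse weighted zeta function (weighted Möbius function) at the full interval equals μ̄(0̂,1̂) = (−1)^{n+1}·h̄_{{1,…,n}}, where h̄ is the flag h̄-vector. -/
open scoped Classical
open Finset

noncomputable section

/-- The free noncommutative algebra `ℚ⟨a,b⟩`. -/
abbrev QA : Type := FreeAlgebra ℚ Bool

/-- The variable `a`. -/
def av : QA := FreeAlgebra.ι ℚ true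

/-- The variable `b`. -/
def bv : QA := FreeAlgebra.ι ℚ false

/-- `c = a + b`. -/
def cvar : QA := av + bv

/-- `d = ab + ba`. -/
def dvar : QA := av * bv + bv * av

variable {α : Type*}

/-- The `ζ̄`-weight of a chain encoded as `f : Fin (k+1) → α`:
the product of the values of `ζ̄` on consecutive elements. -/
def chainZeta (ζ : α → α → ℚ) {k : ℕ} (f : Fin (k + 1) → α) : ℚ :=
  (List.ofFn (fun i : Fin k => ζ (f i.castSucc) (f i.succ))).prod

/-- The `ab`-weight of a chain: `(a-b)^{g₁-1} · b · (a-b)^{g₂-1} · b ⋯ b · (a-b)^{g_k-1}`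
where `gᵢ` are the successive rank gaps along the chain. -/
def chainWt (ρ : α → ℕ) {k : ℕ} (f : Fin (k + 1) → α) : QA :=
  (List.ofFn (fun i : Fin k =>
    (if (i : ℕ) = 0 then 1 else bv) *
      (av - bv) ^ (ρ (f i.succ) - ρ (f i.castSucc) - 1))).prod

/-- `f` encodes a (strict) chain from `x` to `z`. -/
def IsChainFrom [PartialOrder α] {k : ℕ} (f : Fin (k + 1) → α) (x z : α) : Prop :=
  StrictMono f ∧ f 0 = x ∧ f (Fin.last k) = z

/-- The ab-index `Ψ` of the interval `[x,z]` of a quasi-graded poset: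
the sum over all chains from `x` to `z` of `ζ̄(c) · wt(c)`. -/
def abIndex [PartialOrder α] [Fintype α] (ρ : α → ℕ) (ζ : α → α → ℚ) (x z : α) : QA :=
  ∑ k ∈ Finset.range (Fintype.card α), ∑ f : Fin (k + 1) → α,
    if IsChainFrom f x z then chainZeta ζ f • chainWt ρ f else 0

/-- `(P,ρ,ζ̄)` is a quasi-graded poset: `ρ` is strictly order-preserving and `ζ̄`
is an element of the incidence algebra with `ζ̄(x,x) = 1`. -/
def IsQuasiGraded [PartialOrder α] (ρ : α → ℕ) (ζ : α → α → ℚ) : Prop :=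
  StrictMono ρ ∧ (∀ x, ζ x x = 1) ∧ ∀ x y : α, ¬ x ≤ y → ζ x y = 0

/-- Convolution in the incidence algebra. -/
def iaMul [PartialOrder α] [Fintype α] (f g : α → α → ℚ) : α → α → ℚ :=
  fun x z => ∑ y ∈ Finset.univ.filter (fun y => x ≤ y ∧ y ≤ z), f x y * g y z

/-- The identity `δ` of the incidence algebra. -/
def iaDelta : α → α → ℚ := fun x z => if x = z then 1 else 0

/-- The Eulerian condition on the interval `[x,z]`:
`∑_{x ≤ y ≤ z} (-1)^{ρ(y)-ρ(x)} ζ̄(x,y) ζ̄(y,z) = δ_{x,z}`. -/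
def EulerianAt [PartialOrder α] [Fintype α] (ρ : α → ℕ) (ζ : α → α → ℚ) (x z : α) : Prop :=
  (∑ y ∈ Finset.univ.filter (fun y => x ≤ y ∧ y ≤ z),
    (-1 : ℚ) ^ (ρ y - ρ x) * ζ x y * ζ y z) = iaDelta x z

/-- `(P,ρ,ζ̄)` is Eulerian. -/
def IsEulerian [PartialOrder α] [Fintype α] (ρ : α → ℕ) (ζ : α → α → ℚ) : Prop :=
  ∀ x z : α, x ≤ z → EulerianAt ρ ζ x z

/-- The flag `f̄`-vector: `f̄_S = ∑_c ζ̄(c)` over chains from `x` to `z`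
whose interior elements have ranks exactly `S`. -/
def flagF [PartialOrder α] [Fintype α] (ρ : α → ℕ) (ζ : α → α → ℚ)
    (x z : α) (S : Finset ℕ) : ℚ :=
  ∑ k ∈ Finset.range (Fintype.card α), ∑ f : Fin (k + 1) → α,
    if IsChainFrom f x z ∧
        (Finset.univ.filter (fun i : Fin (k + 1) => i ≠ 0 ∧ i ≠ Fin.last k)).image
          (fun i => ρ (f i)) = S
      then chainZeta ζ f else 0

/-- The flag `h̄`-vector: `h̄_S = ∑_{T ⊆ S} (-1)^{|S-T|} f̄_T`. -/
def flagH [PartialOrder α] [Fintype α] (ρ : α → ℕ) (ζ : α → α → ℚ)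
    (x z : α) (S : Finset ℕ) : ℚ :=
  ∑ T ∈ S.powerset, (-1 : ℚ) ^ (S.card - T.card) * flagF ρ ζ x z T

/-- Chains with respect to an explicit strict relation `lt`. -/
def IsChainFromRel (lt : α → α → Prop) {k : ℕ} (f : Fin (k + 1) → α) (x z : α) : Prop :=
  (∀ i j : Fin (k + 1), i < j → lt (f i) (f j)) ∧ f 0 = x ∧ f (Fin.last k) = z

/-- The ab-index with respect to an explicit strict order relation `lt`. -/
def abIndexRel [Fintype α] (lt : α → α → Prop) (ρ : α → ℕ) (ζ : α → α → ℚ)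
    (x z : α) : QA :=
  ∑ k ∈ Finset.range (Fintype.card α), ∑ f : Fin (k + 1) → α,
    if IsChainFromRel lt f x z then chainZeta ζ f • chainWt ρ f else 0

/-- The Eulerian condition with respect to an explicit order relation `le`. -/
def IsEulerianRel [Fintype α] (le : α → α → Prop) (ρ : α → ℕ) (ζ : α → α → ℚ) : Prop :=
  ∀ x z : α, le x z →
    (∑ y ∈ Finset.univ.filter (fun y => le x y ∧ le y z),
      (-1 : ℚ) ^ (ρ y - ρ x) * ζ x y * ζ y z) = (if x = z then (1 : ℚ) else 0)

/-- Carrier of the zipped poset: remove `x` and `y`; the element `z` plays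
the role of the new element `w`. -/
abbrev ZipCarrier (α : Type*) (x y : α) : Type _ := {u : α // u ≠ x ∧ u ≠ y}

/-- The strict order of the zipped poset: `u <_Q w` iff `u < x` or `u < y`,
`w <_Q v` iff `x < v`, and otherwise the order is inherited from `P`. -/
def zipLt [PartialOrder α] (x y z : α) : ZipCarrier α x y → ZipCarrier α x y → Prop :=
  fun u v =>
    if u.1 = z then v.1 ≠ z ∧ x < v.1
    else if v.1 = z then u.1 < x ∨ u.1 < y
    else u.1 < v.1

/-- The (non-strict) order of the zipped poset. -/
def zipLe [PartialOrder α] (x y z : α) : ZipCarrier α x y → ZipCarrier α x y → Prop :=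
  fun u v => zipLt x y z u v ∨ u = v

/-- The rank function of the zipped poset: `ρ_Q(w) = ρ(x)`, otherwise inherited. -/
def zipRank [PartialOrder α] (ρ : α → ℕ) (x y z : α) : ZipCarrier α x y → ℕ :=
  fun u => if u.1 = z then ρ x else ρ u.1

/-- The weighted zeta function of the zipped poset:
`ζ̄_Q(w,v) = ζ̄(x,v)`, `ζ̄_Q(u,w) = ζ̄(u,x) + ζ̄(u,y) - ζ̄(u,z)`, otherwise inherited. -/
def zipZeta [PartialOrder α] (ζ : α → α → ℚ) (x y z : α) :
    ZipCarrier α x y → ZipCarrier α x y → ℚ :=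
  fun u v =>
    if v.1 = z then (if u.1 = z then 1 else ζ u.1 x + ζ u.1 y - ζ u.1 z)
    else if u.1 = z then ζ x v.1
    else ζ u.1 v.1

/-! Both sides equal Philip Hall's alternating chain sum
`μ̄(x, z) = ∑ₖ (-1)ᵏ C_k(x, z)`, where `C_k(x, z)` is the `ζ̄`-weighted count of chains from `x`
to `z` with `k` steps. Since `C_{k+1}(x, z) = ∑_{x < y ≤ z} ζ̄(x, y) C_k(y, z)`, the convolution
`ζ̄ * μ̄` telescopes to `C_0 = δ`; so `μ̄` is a right inverse of `ζ̄` and coincides with every left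
inverse by associativity. On the flag side, a chain from `0̂` to `1̂` with `k` steps has `k - 1`
interior ranks, all in `{1, …, n}`, so it contributes to `h̄_{{1,…,n}}` exactly once, with sign
`(-1)^(n - (k - 1))`. -/

section IncidenceAlgebra

variable [PartialOrder α] [Fintype α]

lemma iaMul_assoc (f g h : α → α → ℚ) : iaMul (iaMul f g) h = iaMul f (iaMul g h) := by
  funext x z
  simp only [iaMul, Finset.sum_mul, Finset.mul_sum, mul_assoc]
  refine Finset.sum_comm' fun y w => ?_
  simp only [Finset.mem_filter, Finset.mem_univ, true_and]
  constructor
  · rintro ⟨⟨hxy, hyz⟩, hxw, hwy⟩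
    exact ⟨⟨hwy, hyz⟩, hxw, hwy.trans hyz⟩
  · rintro ⟨⟨hwy, hyz⟩, hxw, -⟩
    exact ⟨⟨hxw.trans hwy, hyz⟩, hxw, hwy⟩

lemma iaDelta_mul (h : α → α → ℚ) {x z : α} (hxz : x ≤ z) : iaMul iaDelta h x z = h x z := by
  rw [iaMul, Finset.sum_eq_single_of_mem x (by simp [hxz])
    fun y _ hy => by rw [iaDelta, if_neg (Ne.symm hy), zero_mul]]
  rw [iaDelta, if_pos rfl, one_mul]

lemma iaMul_delta (h : α → α → ℚ) {x z : α} (hxz : x ≤ z) : iaMul h iaDelta x z = h x z := by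
  rw [iaMul, Finset.sum_eq_single_of_mem z (by simp [hxz])
    fun y _ hy => by rw [iaDelta, if_neg hy, mul_zero]]
  rw [iaDelta, if_pos rfl, mul_one]

lemma eq_of_iaMul_eq_iaDelta {ζ m μ : α → α → ℚ} (hm : iaMul m ζ = iaDelta)
    (hμ : iaMul ζ μ = iaDelta) {x z : α} (hxz : x ≤ z) : m x z = μ x z := by
  rw [← iaMul_delta m hxz, ← hμ, ← iaMul_assoc, hm, iaDelta_mul μ hxz]

end IncidenceAlgebra

lemma chainZeta_cons (ζ : α → α → ℚ) {k : ℕ} (a : α) (g : Fin (k + 1) → α) :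
    chainZeta ζ (Fin.cons a g) = ζ a (g 0) * chainZeta ζ g := by
  simp only [chainZeta, List.prod_ofFn, Fin.prod_univ_succ, Fin.castSucc_zero,
    ← Fin.succ_castSucc, Fin.cons_zero, Fin.cons_succ]

section Chains

variable [PartialOrder α]

lemma isChainFrom_cons {k : ℕ} (a : α) (g : Fin (k + 1) → α) (x z : α) :
    IsChainFrom (Fin.cons a g) x z ↔ a = x ∧ a < g 0 ∧ IsChainFrom g (g 0) z := by
  have hlast : (Fin.cons a g : Fin (k + 2) → α) (Fin.last (k + 1)) = g (Fin.last k) := by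
    rw [← Fin.succ_last, Fin.cons_succ]
  have hmono : StrictMono (Fin.cons a g : Fin (k + 2) → α) ↔ a < g 0 ∧ StrictMono g :=
    strictMono_vecCons
  simp only [IsChainFrom, hmono, hlast, Fin.cons_zero]
  tauto

lemma IsChainFrom.le {k : ℕ} {f : Fin (k + 1) → α} {x z : α} (hf : IsChainFrom f x z) :
    x ≤ z := by
  rw [← hf.2.1, ← hf.2.2]
  exact hf.1.monotone (Fin.zero_le _)

variable [Fintype α]

lemma IsChainFrom.length_lt_card {k : ℕ} {f : Fin (k + 1) → α} {x z : α}
    (hf : IsChainFrom f x z) : k < Fintype.card α := by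
  simpa using Fintype.card_le_of_injective f hf.1.injective

/-- The `ζ̄`-weighted count of chains `x = f 0 < ⋯ < f k = z`. -/
def chainZetaSum (ζ : α → α → ℚ) (k : ℕ) (x z : α) : ℚ :=
  ∑ f : Fin (k + 1) → α, if IsChainFrom f x z then chainZeta ζ f else 0

variable (ζ : α → α → ℚ)

lemma chainZetaSum_zero (x z : α) : chainZetaSum ζ 0 x z = iaDelta x z := by
  have : Subsingleton (Fin (0 + 1)) := inferInstanceAs (Subsingleton (Fin 1))
  rw [chainZetaSum, Fintype.sum_eq_single (fun _ => x)]
  · by_cases hxz : x = z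
    · subst hxz
      rw [if_pos ⟨Subsingleton.strictMono _, rfl, rfl⟩, iaDelta, if_pos rfl]
      simp [chainZeta]
    · rw [if_neg fun hc => hxz hc.2.2, iaDelta, if_neg hxz]
  · intro f hf
    refine if_neg fun hc => hf (funext fun i => ?_)
    rw [Subsingleton.elim i 0, hc.2.1]

lemma chainZetaSum_succ (k : ℕ) (x z : α) :
    chainZetaSum ζ (k + 1) x z =
      ∑ y ∈ Finset.univ.filter (fun y => x < y ∧ y ≤ z), ζ x y * chainZetaSum ζ k y z := by
  rw [chainZetaSum, ← Fintype.sum_equiv (Fin.consEquiv fun _ => α)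
    (fun p => if IsChainFrom (Fin.cons p.1 p.2) x z then chainZeta ζ (Fin.cons p.1 p.2) else 0)
    _ fun _ => rfl, Fintype.sum_prod_type]
  rw [Fintype.sum_eq_single x fun a ha => Finset.sum_eq_zero fun g _ =>
      if_neg fun hc => ha ((isChainFrom_cons a g x z).mp hc).1]
  simp only [Finset.mul_sum, chainZetaSum, mul_ite, mul_zero, Finset.sum_filter,
    Finset.ite_sum_zero]
  rw [Finset.sum_comm]
  refine Finset.sum_congr rfl fun g _ => ?_
  rw [Fintype.sum_eq_single (g 0) fun y hy =>
    ite_eq_right_iff.mpr fun _ => if_neg fun hc => hy hc.2.1.symm]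
  simp only [isChainFrom_cons, chainZeta_cons, true_and]
  by_cases hc : x < g 0 ∧ IsChainFrom g (g 0) z
  · rw [if_pos hc, if_pos ⟨hc.1, hc.2.le⟩, if_pos hc.2]
  · rw [if_neg hc]
    split_ifs <;> tauto

lemma chainZetaSum_eq_zero_of_card_le {k : ℕ} (hk : Fintype.card α ≤ k) (x z : α) :
    chainZetaSum ζ k x z = 0 :=
  Finset.sum_eq_zero fun _ _ => if_neg fun hc => (hc.length_lt_card).not_ge hk

end Chains

section Mobius

variable [PartialOrder α] [Fintype α] (ζ : α → α → ℚ)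

def chainMu (x z : α) : ℚ :=
  ∑ k ∈ Finset.range (Fintype.card α), (-1 : ℚ) ^ k * chainZetaSum ζ k x z

lemma chainMu_add_sum_zeta_mul_chainMu (x z : α) :
    chainMu ζ x z +
        ∑ y ∈ Finset.univ.filter (fun y => x < y ∧ y ≤ z), ζ x y * chainMu ζ y z =
      iaDelta x z := by
  have hstep : ∑ y ∈ Finset.univ.filter (fun y => x < y ∧ y ≤ z), ζ x y * chainMu ζ y z =
      ∑ k ∈ Finset.range (Fintype.card α), (-1 : ℚ) ^ k * chainZetaSum ζ (k + 1) x z := by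
    simp only [chainMu, chainZetaSum_succ, Finset.mul_sum]
    rw [Finset.sum_comm]
    simp only [mul_left_comm]
  set g : ℕ → ℚ := fun k => (-1) ^ k * chainZetaSum ζ k x z
  calc _ = ∑ k ∈ Finset.range (Fintype.card α), (g k - g (k + 1)) := by
        rw [hstep, chainMu, ← Finset.sum_add_distrib]
        exact Finset.sum_congr rfl fun k _ => by simp only [g]; ring
    _ = g 0 - g (Fintype.card α) := Finset.sum_range_sub' g _
    _ = iaDelta x z := by
        simp [g, chainZetaSum_zero, chainZetaSum_eq_zero_of_card_le ζ le_rfl]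

lemma filter_le_le_eq_insert {x z : α} (hxz : x ≤ z) :
    Finset.univ.filter (fun y => x ≤ y ∧ y ≤ z) =
      insert x (Finset.univ.filter fun y => x < y ∧ y ≤ z) := by
  ext y
  simp only [Finset.mem_filter, Finset.mem_univ, true_and, Finset.mem_insert]
  grind [le_iff_eq_or_lt]

lemma iaMul_zeta_chainMu (hζ : ∀ x, ζ x x = 1) : iaMul ζ (chainMu ζ) = iaDelta := by
  funext x z
  by_cases hxz : x ≤ z
  · rw [iaMul, filter_le_le_eq_insert hxz, Finset.sum_insert (by simp), hζ, one_mul,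
      chainMu_add_sum_zeta_mul_chainMu]
  · rw [iaMul, iaDelta, if_neg fun h => hxz h.le]
    exact Finset.sum_eq_zero fun y hy => absurd ((Finset.mem_filter.mp hy).2.1.trans
      (Finset.mem_filter.mp hy).2.2) hxz

end Mobius

section FlagVectors

variable (ρ : α → ℕ)

/-- The rank set `S` of a chain in the definition of `flagF`. -/
def interiorRanks {k : ℕ} (f : Fin (k + 1) → α) : Finset ℕ :=
  (Finset.univ.filter (fun i : Fin (k + 1) => i ≠ 0 ∧ i ≠ Fin.last k)).image (fun i => ρ (f i))

lemma card_interiorRanks {k : ℕ} {f : Fin (k + 2) → α}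
    (hf : Function.Injective (fun i => ρ (f i))) : (interiorRanks ρ f).card = k := by
  have hfilter : Finset.univ.filter (fun i : Fin (k + 2) => i ≠ 0 ∧ i ≠ Fin.last (k + 1)) =
      Finset.univ \ {0, Fin.last (k + 1)} := by
    ext i
    simp only [Finset.mem_filter, Finset.mem_univ, true_and, Finset.mem_sdiff,
      Finset.mem_insert, Finset.mem_singleton]
    tauto
  rw [interiorRanks, Finset.card_image_of_injective _ hf, hfilter,
    Finset.card_sdiff_of_subset (Finset.subset_univ _),
    Finset.card_pair (by simp [Fin.ext_iff]), Finset.card_univ, Fintype.card_fin]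
  rfl

variable [PartialOrder α] [BoundedOrder α] {ρ}

lemma interiorRanks_subset_Icc (hρ : StrictMono ρ) {n : ℕ} (h0 : ρ ⊥ = 0) (h1 : ρ ⊤ = n + 1)
    {k : ℕ} {f : Fin (k + 1) → α} (hf : IsChainFrom f ⊥ ⊤) :
    interiorRanks ρ f ⊆ Finset.Icc 1 n := by
  intro r hr
  obtain ⟨i, hi, rfl⟩ := Finset.mem_image.mp hr
  obtain ⟨-, hi0, hil⟩ := Finset.mem_filter.mp hi
  have hbot : ρ ⊥ < ρ (f i) := hρ (hf.2.1 ▸ hf.1 (Fin.pos_of_ne_zero hi0))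
  have htop : ρ (f i) < ρ ⊤ := hρ (hf.2.2 ▸ hf.1 ((Fin.le_last i).lt_of_ne hil))
  exact Finset.mem_Icc.mpr ⟨by omega, by omega⟩


lemma neg_one_pow_mul_flagH_Icc [Fintype α] (ζ : α → α → ℚ) (hρ : StrictMono ρ) {n : ℕ}
    (h0 : ρ ⊥ = 0) (h1 : ρ ⊤ = n + 1) :
    (-1 : ℚ) ^ (n + 1) * flagH ρ ζ ⊥ ⊤ (Finset.Icc 1 n) = chainMu ζ ⊥ ⊤ := by
  simp only [flagH, flagF, chainMu, chainZetaSum, Finset.mul_sum, mul_ite, mul_zero]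
  rw [Finset.sum_comm]
  refine Finset.sum_congr rfl fun k _ => ?_
  rw [Finset.sum_comm]
  refine Finset.sum_congr rfl fun f _ => ?_
  by_cases hf : IsChainFrom f ⊥ ⊤
  · obtain ⟨k, rfl⟩ : ∃ k', k = k' + 1 := Nat.exists_eq_succ_of_ne_zero fun hk => by
      subst hk
      have := congrArg ρ (hf.2.1.symm.trans hf.2.2)
      omega
    have hsub := interiorRanks_subset_Icc hρ h0 h1 hf
    have hcard := card_interiorRanks ρ (hρ.comp hf.1).injective
    have hkn : k ≤ n := by simpa [hcard] using Finset.card_le_card hsub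
    change ∑ T ∈ _, (if IsChainFrom f ⊥ ⊤ ∧ interiorRanks ρ f = T then _ else _) = _
    simp only [hf, true_and, Finset.sum_ite_eq, Finset.mem_powerset, hsub, if_true, hcard,
      Nat.card_Icc, Nat.add_sub_cancel, ← mul_assoc, ← pow_add]
    obtain ⟨d, rfl⟩ := Nat.exists_eq_add_of_le hkn
    rw [Nat.add_sub_cancel_left, show k + d + 1 + d = k + 1 + 2 * d by ring, pow_add, pow_mul]
    simp
  · simp only [hf, false_and, if_false, Finset.sum_const_zero]

end FlagVectors

theorem mu_eq_flagH_full_general {α : Type*} [Fintype α] [PartialOrder α] [BoundedOrder α]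
    (ρ : α → ℕ) (ζ : α → α → ℚ) (hq : IsQuasiGraded ρ ζ)
    (n : ℕ) (h0 : ρ (⊥ : α) = 0) (h1 : ρ (⊤ : α) = n + 1)
    (m : α → α → ℚ) (hm₂ : iaMul m ζ = iaDelta) :
    m (⊥ : α) ⊤ = (-1 : ℚ) ^ (n + 1) * flagH ρ ζ (⊥ : α) ⊤ (Finset.Icc 1 n) := by
  rw [neg_one_pow_mul_flagH_Icc ζ hq.1 h0 h1]
  exact eq_of_iaMul_eq_iaDelta hm₂ (iaMul_zeta_chainMu ζ hq.2.1) bot_le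

/-- `μ̄(0̂,1̂) = (-1)^{n+1} h̄_{{1,…,n}}`. -/
theorem mu_eq_flagH_full {α : Type*} [Fintype α] [PartialOrder α] [BoundedOrder α]
    (ρ : α → ℕ) (ζ : α → α → ℚ) (hq : IsQuasiGraded ρ ζ)
    (n : ℕ) (h0 : ρ (⊥ : α) = 0) (h1 : ρ (⊤ : α) = n + 1)
    (m : α → α → ℚ) (hm₁ : iaMul ζ m = iaDelta) (hm₂ : iaMul m ζ = iaDelta) :
    m (⊥ : α) ⊤ = (-1 : ℚ) ^ (n + 1) * flagH ρ ζ (⊥ : α) ⊤ (Finset.Icc 1 n) :=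
  mu_eq_flagH_full_general ρ ζ hq n h0 h1 m hm₂
end
end

section
/- Let (P,ρ,ζ̄) be a quasi-graded poset such that for every interval [x,z] the ab-index Ψ([x,z],ρ,ζ̄) lies in the subalgebra of ℚ⟨a,b⟩ generated by c = a+b and d = ab+ba. Then (P,ρ,ζ̄) is Eulerian. -/
/-!
Evaluating `a ↦ p, b ↦ q` is an algebra map `ℚ⟨a,b⟩ → ℚ`, and since swapping `a` and `b` fixes
`c` and `d`, the evaluations at `(0, -1)` and at `(-1, 0)` agree on `cd`-polynomials.
Let `μ(x,z) = ∑ₖ (-1)ᵏ ζ̄ₖ(x,z)`, where `ζ̄ₖ(x,z)` is the `ζ̄`-weighted number of chains with `k`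
steps from `x` to `z`; the recursion `ζ̄ₖ₊₁ = ζ̄ₖ * (ζ̄ - δ)` makes `μ * ζ̄` telescope to `δ`.
For `x < z`, the first evaluation sends the weight of a `k`-step chain to `(-1)^(k-1)`, so it
maps `Ψ([x,z])` to `-μ(x,z)`; the second kills every chain except `x < z` itself, leaving
`(-1)^(ρ(z)-ρ(x)-1) ζ̄(x,z)`. Hence `μ(x,z) = (-1)^(ρ(z)-ρ(x)) ζ̄(x,z)`, and `μ * ζ̄ = δ` is the
Eulerian relation.
-/

open scoped Classical
open Finset

noncomputable section

variable {α : Type*}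

def evalAB (p q : ℚ) : QA →ₐ[ℚ] ℚ := FreeAlgebra.lift ℚ fun t => if t then p else q

@[simp] lemma evalAB_av (p q : ℚ) : evalAB p q av = p := by simp [evalAB, av]

@[simp] lemma evalAB_bv (p q : ℚ) : evalAB p q bv = q := by simp [evalAB, bv]

lemma evalAB_swap_of_mem_adjoin {u : QA} (hu : u ∈ Algebra.adjoin ℚ ({cvar, dvar} : Set QA))
    (p q : ℚ) : evalAB p q u = evalAB q p u := by
  induction hu using Algebra.adjoin_induction with
  | mem v hv =>
    obtain rfl | rfl := hv
    · simp [cvar, add_comm]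
    · simp [dvar, mul_comm]
  | algebraMap r => simp
  | add u v _ _ hu hv => simp [hu, hv]
  | mul u v _ _ hu hv => simp [hu, hv]

lemma chainZeta_eq_prod (ζ : α → α → ℚ) {k : ℕ} (f : Fin (k + 1) → α) :
    chainZeta ζ f = ∏ i : Fin k, ζ (f i.castSucc) (f i.succ) :=
  List.prod_ofFn

lemma chainZeta_snoc (ζ : α → α → ℚ) {k : ℕ} (g : Fin (k + 1) → α) (y : α) :
    chainZeta ζ (Fin.snoc g y : Fin (k + 2) → α) = chainZeta ζ g * ζ (g (Fin.last k)) y := by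
  simp only [chainZeta_eq_prod, Fin.prod_univ_castSucc, Fin.succ_castSucc, Fin.snoc_castSucc,
    Fin.succ_last, Fin.snoc_last]

lemma evalAB_chainWt (p q : ℚ) (ρ : α → ℕ) {k : ℕ} (f : Fin (k + 1) → α) :
    evalAB p q (chainWt ρ f) = ∏ i : Fin k,
      (if (i : ℕ) = 0 then 1 else q) * (p - q) ^ (ρ (f i.succ) - ρ (f i.castSucc) - 1) := by
  rw [chainWt, map_list_prod, List.map_ofFn, List.prod_ofFn]
  refine Finset.prod_congr rfl fun i _ => ?_
  simp [apply_ite (evalAB p q)]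

lemma evalAB_zero_neg_one_chainWt (ρ : α → ℕ) {k : ℕ} (f : Fin (k + 1) → α) :
    evalAB 0 (-1) (chainWt ρ f) = (-1) ^ (k - 1) := by
  rw [evalAB_chainWt]
  cases k with
  | zero => simp
  | succ m => simp [Fin.prod_univ_succ]

lemma evalAB_neg_one_zero_chainWt_of_two_le (ρ : α → ℕ) {k : ℕ} (hk : 2 ≤ k)
    (f : Fin (k + 1) → α) : evalAB (-1) 0 (chainWt ρ f) = 0 := by
  rw [evalAB_chainWt]
  exact Finset.prod_eq_zero (Finset.mem_univ ⟨1, hk⟩) (by simp)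

lemma evalAB_neg_one_zero_chainWt_one (ρ : α → ℕ) (f : Fin 2 → α) :
    evalAB (-1) 0 (chainWt ρ f) = (-1) ^ (ρ (f 1) - ρ (f 0) - 1) := by
  simp [evalAB_chainWt]

section Chains

variable [PartialOrder α]

lemma IsChainFrom.lt {k : ℕ} {f : Fin (k + 1) → α} {x z : α} (hf : IsChainFrom f x z)
    (hk : k ≠ 0) : x < z :=
  hf.2.1 ▸ hf.2.2 ▸ hf.1 (by rw [Fin.lt_def, Fin.val_zero, Fin.val_last]; omega)

lemma isChainFrom_zero_iff (f : Fin 1 → α) (x z : α) :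
    IsChainFrom f x z ↔ f 0 = x ∧ f 0 = z :=
  and_iff_right (Subsingleton.strictMono f)

lemma strictMono_snoc_iff {k : ℕ} (g : Fin (k + 1) → α) (y : α) :
    StrictMono (Fin.snoc g y : Fin (k + 2) → α) ↔ StrictMono g ∧ g (Fin.last k) < y := by
  simp only [Fin.strictMono_iff_lt_succ, Fin.forall_fin_succ', Fin.succ_last, Fin.snoc_last,
    Fin.succ_castSucc, Fin.snoc_castSucc]

lemma isChainFrom_snoc_iff {k : ℕ} (g : Fin (k + 1) → α) (x y z : α) :
    IsChainFrom (Fin.snoc g y : Fin (k + 2) → α) x z ↔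
      IsChainFrom g x (g (Fin.last k)) ∧ g (Fin.last k) < y ∧ y = z := by
  have h0 : (Fin.snoc g y : Fin (k + 2) → α) 0 = g 0 := Fin.snoc_castSucc (i := 0) ..
  simp only [IsChainFrom, strictMono_snoc_iff, h0, Fin.snoc_last]
  tauto

variable [Fintype α]

def chainSum (ζ : α → α → ℚ) (k : ℕ) (x z : α) : ℚ :=
  ∑ f : Fin (k + 1) → α, if IsChainFrom f x z then chainZeta ζ f else 0

lemma chainSum_of_not_le (ζ : α → α → ℚ) (k : ℕ) {x z : α} (h : ¬ x ≤ z) :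
    chainSum ζ k x z = 0 :=
  Finset.sum_eq_zero fun _ _ => if_neg fun hf => h hf.le

lemma chainSum_of_not_lt (ζ : α → α → ℚ) {k : ℕ} (hk : k ≠ 0) {x z : α} (h : ¬ x < z) :
    chainSum ζ k x z = 0 :=
  Finset.sum_eq_zero fun _ _ => if_neg fun hf => h (hf.lt hk)

lemma chainSum_of_card_le (ζ : α → α → ℚ) {k : ℕ} (hk : Fintype.card α ≤ k) (x z : α) :
    chainSum ζ k x z = 0 := by
  refine Finset.sum_eq_zero fun f _ => if_neg fun hf => ?_
  have := Fintype.card_le_of_injective f hf.1.injective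
  simp only [Fintype.card_fin] at this
  omega

lemma chainSum_zero (ζ : α → α → ℚ) (x z : α) :
    chainSum ζ 0 x z = if x = z then 1 else 0 := by
  simp only [chainSum, isChainFrom_zero_iff, chainZeta_eq_prod, Finset.univ_eq_empty,
    Finset.prod_empty]
  rw [← (Equiv.funUnique (Fin 1) α).symm.sum_comp]
  by_cases h : x = z <;> simp [h]

lemma chainSum_succ (ζ : α → α → ℚ) (k : ℕ) (x z : α) :
    chainSum ζ (k + 1) x z = ∑ y, chainSum ζ k x y * if y < z then ζ y z else 0 := by
  have snocEquiv_eq (p : α × (Fin (k + 1) → α)) :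
      Fin.snocEquiv (fun _ => α) p = Fin.snoc p.2 p.1 := rfl
  simp only [chainSum, Finset.sum_mul]
  rw [← (Fin.snocEquiv fun _ => α).sum_comp, Fintype.sum_prod_type, Finset.sum_comm]
  conv_rhs => rw [Finset.sum_comm]
  refine Finset.sum_congr rfl fun g _ => ?_
  simp only [snocEquiv_eq]
  rw [Fintype.sum_eq_single z fun y hy => if_neg fun hc => hy ((isChainFrom_snoc_iff ..).1 hc).2.2,
    Fintype.sum_eq_single (g (Fin.last k)) fun y hy => by
      rw [if_neg fun hc => hy hc.2.2.symm, zero_mul]]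
  simp only [isChainFrom_snoc_iff, chainZeta_snoc, and_true]
  split_ifs <;> simp_all

def zetaInv (ζ : α → α → ℚ) (x z : α) : ℚ :=
  ∑ k ∈ Finset.range (Fintype.card α), (-1) ^ k * chainSum ζ k x z

lemma zetaInv_of_not_le (ζ : α → α → ℚ) {x z : α} (h : ¬ x ≤ z) : zetaInv ζ x z = 0 :=
  Finset.sum_eq_zero fun k _ => by rw [chainSum_of_not_le ζ k h, mul_zero]

lemma zetaInv_self (ζ : α → α → ℚ) (x : α) : zetaInv ζ x x = 1 := by
  have hcard : 0 < Fintype.card α := Fintype.card_pos_iff.2 ⟨x⟩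
  rw [zetaInv, Finset.sum_eq_single_of_mem 0 (Finset.mem_range.2 hcard)
    fun k _ hk => by rw [chainSum_of_not_lt ζ hk (lt_irrefl x), mul_zero]]
  simp [chainSum_zero]

theorem iaMul_zetaInv (ζ : α → α → ℚ) (hdiag : ∀ x, ζ x x = 1)
    (hzero : ∀ x y, ¬ x ≤ y → ζ x y = 0) : iaMul (zetaInv ζ) ζ = iaDelta := by
  funext x z
  have hsplit (y : α) : ζ y z = (if y = z then 1 else 0) + if y < z then ζ y z else 0 := by
    rcases eq_or_ne y z with rfl | hne
    · simp [hdiag]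
    · by_cases hlt : y < z
      · simp [hne, hlt]
      · simp [hne, hlt, hzero y z fun hle => hlt (hle.lt_of_ne hne)]
  have hstep (k : ℕ) :
      ∑ y, chainSum ζ k x y * ζ y z = chainSum ζ k x z + chainSum ζ (k + 1) x z := by
    rw [Finset.sum_congr rfl fun y _ => by rw [hsplit y, mul_add], Finset.sum_add_distrib,
      chainSum_succ]
    simp
  have hsupp : iaMul (zetaInv ζ) ζ x z = ∑ y, zetaInv ζ x y * ζ y z := by
    refine Finset.sum_subset (Finset.subset_univ _) fun y _ hy => ?_
    simp only [Finset.mem_filter, Finset.mem_univ, true_and, not_and_or] at hy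
    rcases hy with hxy | hyz
    · rw [zetaInv_of_not_le ζ hxy, zero_mul]
    · rw [hzero y z hyz, mul_zero]
  calc iaMul (zetaInv ζ) ζ x z
      = ∑ k ∈ Finset.range (Fintype.card α),
          ((-1) ^ k * chainSum ζ k x z - (-1) ^ (k + 1) * chainSum ζ (k + 1) x z) := by
        simp only [hsupp, zetaInv, Finset.sum_mul, mul_assoc]
        rw [Finset.sum_comm]
        refine Finset.sum_congr rfl fun k _ => ?_
        rw [← Finset.mul_sum, hstep, pow_succ]
        ring
    _ = iaDelta x z := by
        rw [Finset.sum_range_sub', chainSum_of_card_le ζ le_rfl, chainSum_zero]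
        simp [iaDelta]

end Chains

section AbIndex

variable [PartialOrder α] [Fintype α] (ρ : α → ℕ) (ζ : α → α → ℚ)

lemma map_abIndex_eq_sum_chainSum (φ : QA →ₐ[ℚ] ℚ) {x z : α} (w : ℕ → ℚ)
    (hw : ∀ k (f : Fin (k + 1) → α), IsChainFrom f x z → φ (chainWt ρ f) = w k) :
    φ (abIndex ρ ζ x z) = ∑ k ∈ Finset.range (Fintype.card α), w k * chainSum ζ k x z := by
  rw [abIndex, map_sum]
  refine Finset.sum_congr rfl fun k _ => ?_
  rw [map_sum, chainSum, Finset.mul_sum]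
  refine Finset.sum_congr rfl fun f _ => ?_
  split_ifs with hf
  · rw [map_smul, hw k f hf, smul_eq_mul, mul_comm]
  · rw [map_zero, mul_zero]

lemma evalAB_zero_neg_one_abIndex {x z : α} (hxz : x ≠ z) :
    evalAB 0 (-1) (abIndex ρ ζ x z) = -zetaInv ζ x z := by
  rw [map_abIndex_eq_sum_chainSum ρ ζ _ _ fun k f _ => evalAB_zero_neg_one_chainWt ρ f, zetaInv,
    ← Finset.sum_neg_distrib]
  refine Finset.sum_congr rfl fun k _ => ?_
  rcases k with _ | k
  · simp [chainSum_zero, hxz]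
  · rw [Nat.add_sub_cancel, pow_succ]
    ring

lemma evalAB_neg_one_zero_abIndex {x z : α} (hxz : x < z) :
    evalAB (-1) 0 (abIndex ρ ζ x z) = (-1) ^ (ρ z - ρ x - 1) * ζ x z := by
  let w : ℕ → ℚ
    | 0 => 1
    | 1 => (-1) ^ (ρ z - ρ x - 1)
    | _ + 2 => 0
  have hw (k : ℕ) (f : Fin (k + 1) → α) (hf : IsChainFrom f x z) :
      evalAB (-1) 0 (chainWt ρ f) = w k := by
    match k with
    | 0 => simp [w, chainWt]
    | 1 => rw [evalAB_neg_one_zero_chainWt_one, hf.2.1, show f 1 = z from hf.2.2]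
    | k + 2 => exact evalAB_neg_one_zero_chainWt_of_two_le ρ (by omega) f
  have hcard : 1 < Fintype.card α := Fintype.one_lt_card_iff_nontrivial.2 ⟨x, z, hxz.ne⟩
  rw [map_abIndex_eq_sum_chainSum ρ ζ _ w hw,
    Finset.sum_eq_single_of_mem 1 (Finset.mem_range.2 hcard) fun k _ hk => ?_]
  · rw [chainSum_succ, Fintype.sum_eq_single x fun y hy => by simp [chainSum_zero, Ne.symm hy]]
    simp [w, chainSum_zero, hxz]
  · match k, hk with
    | 0, _ => simp [chainSum_zero, hxz.ne]
    | k + 2, _ => simp [w]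

variable {ρ ζ}

lemma zetaInv_eq_of_mem_adjoin (hq : IsQuasiGraded ρ ζ) {x z : α} (hxz : x ≤ z)
    (hmem : abIndex ρ ζ x z ∈ Algebra.adjoin ℚ ({cvar, dvar} : Set QA)) :
    zetaInv ζ x z = (-1) ^ (ρ z - ρ x) * ζ x z := by
  rcases hxz.eq_or_lt with rfl | hlt
  · simp [zetaInv_self, hq.2.1]
  · have heval := evalAB_swap_of_mem_adjoin hmem 0 (-1)
    rw [evalAB_zero_neg_one_abIndex ρ ζ hlt.ne, evalAB_neg_one_zero_abIndex ρ ζ hlt] at heval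
    have hgap : ρ z - ρ x = ρ z - ρ x - 1 + 1 := by
      have := hq.1 hlt
      omega
    rw [hgap, pow_succ]
    linarith

end AbIndex

/-- if the ab-index of every interval is a polynomial in `c` and `d`,
then the quasi-graded poset is Eulerian. -/
theorem eulerian_of_cd_index {α : Type*} [Fintype α] [PartialOrder α]
    (ρ : α → ℕ) (ζ : α → α → ℚ) (hq : IsQuasiGraded ρ ζ)
    (hcd : ∀ x z : α, x ≤ z →
      abIndex ρ ζ x z ∈ Algebra.adjoin ℚ ({cvar, dvar} : Set QA)) :
    IsEulerian ρ ζ := by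
  intro x z _
  rw [EulerianAt, ← iaMul_zetaInv ζ hq.2.1 hq.2.2, iaMul]
  refine Finset.sum_congr rfl fun y hy => ?_
  have hxy := (Finset.mem_filter.1 hy).2.1
  rw [zetaInv_eq_of_mem_adjoin hq hxy (hcd x y hxy)]
end
end
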